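/- arXiv:2002.08545 — 2 statements merged into one kernel-verified Lean document; each statement's English description precedes it below -/
import Mathlib

section
/- Let p* ∈ (0,1) and let P be a random variable on [0,1] with a density f that is mirror-conservative, i.e. f(a) ≤ f(1 - ((1-p*)/p*)·a) for all 0 ≤ a ≤ p*. With tent masking h(P) = 1{P < p*} (coded as ±1) and g(P) = min{P, (p*/(1-p*))(1-P)}, for every measurable set A ⊆ (0, p*) it holds that ℙ(P < p* and g(P) ∈ A) ≤ p* · ℙ(g(P) ∈ A); equivalently, ℙ(h(P) = 1 | g(P)) ≤ p* almost surely. -/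
/-!
On `(-∞, p*)` the tent map `g` is the identity, and on `[p*, ∞)` it is the decreasing affine
map `x ↦ p*/(1-p*) (1-x)`, whose inverse is the mirror `a ↦ 1 - (1-p*)/p* a`. So for
`A ⊆ (0, p*)`, `{g ∈ A}` is the disjoint union of `A = {P < p*, g ∈ A}` and the mirror image
of `A`. By the change of variables formula the mirror image has mass `(1-p*)/p* ∫_A f ∘ mirror`,
which by mirror-conservativity is at least `(1-p*)/p*` times the mass of `A`; hence
`ℙ(g(P) ∈ A) ≥ (1 + (1-p*)/p*) ℙ(P ∈ A) = ℙ(P ∈ A) / p*`.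
-/

open MeasureTheory Set
open scoped ENNReal

noncomputable def tentMask (p x : ℝ) : ℝ := min x (p / (1 - p) * (1 - x))

noncomputable def tentMirror (p a : ℝ) : ℝ := 1 - (1 - p) / p * a

@[fun_prop]
theorem measurable_tentMask (p : ℝ) : Measurable (tentMask p) := by
  unfold tentMask
  fun_prop

section

variable {p : ℝ} (hp : p ∈ Ioo 0 1)
include hp

theorem tentMask_of_lt {x : ℝ} (hx : x < p) : tentMask p x = x := by
  obtain ⟨hp0, hp1⟩ := hp
  refine min_eq_left ?_
  rw [div_mul_eq_mul_div, le_div_iff₀ (by linarith)]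
  nlinarith

theorem tentMask_of_le {x : ℝ} (hx : p ≤ x) : tentMask p x = p / (1 - p) * (1 - x) := by
  obtain ⟨hp0, hp1⟩ := hp
  refine min_eq_right ?_
  rw [div_mul_eq_mul_div, div_le_iff₀ (by linarith)]
  nlinarith

theorem tentMirror_tentMask {x : ℝ} (hx : p ≤ x) : tentMirror p (tentMask p x) = x := by
  have : 1 - p ≠ 0 := by linarith [hp.2]
  rw [tentMask_of_le hp hx, tentMirror]
  field_simp [hp.1.ne']
  ring

theorem le_tentMirror {a : ℝ} (ha : a ≤ p) : p ≤ tentMirror p a := by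
  obtain ⟨hp0, hp1⟩ := hp
  rw [tentMirror, div_mul_eq_mul_div, le_sub_comm, div_le_iff₀ hp0]
  nlinarith

theorem lt_tentMirror {a : ℝ} (ha : a < p) : p < tentMirror p a := by
  obtain ⟨hp0, hp1⟩ := hp
  rw [tentMirror, div_mul_eq_mul_div, lt_sub_comm, div_lt_iff₀ hp0]
  nlinarith

theorem tentMask_tentMirror {a : ℝ} (ha : a ≤ p) : tentMask p (tentMirror p a) = a := by
  have : 1 - p ≠ 0 := by linarith [hp.2]
  rw [tentMask_of_le hp (le_tentMirror hp ha), tentMirror]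
  field_simp [hp.1.ne']
  ring

end

section

variable {p : ℝ} {A : Set ℝ} (hp : p ∈ Ioo 0 1) (hA : A ⊆ Iio p)
include hp hA

theorem setOf_lt_and_tentMask_mem : {x | x < p ∧ tentMask p x ∈ A} = A := by
  ext x
  constructor
  · rintro ⟨hx, hxA⟩
    rwa [tentMask_of_lt hp hx] at hxA
  · intro hxA
    exact ⟨hA hxA, by rwa [tentMask_of_lt hp (hA hxA)]⟩

theorem preimage_tentMask : tentMask p ⁻¹' A = A ∪ tentMirror p '' A := by
  ext x
  constructor
  · intro hx
    rcases lt_or_ge x p with hxp | hxp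
    · exact Or.inl (by rwa [mem_preimage, tentMask_of_lt hp hxp] at hx)
    · exact Or.inr ⟨tentMask p x, hx, tentMirror_tentMask hp hxp⟩
  · rintro (hxA | ⟨a, haA, rfl⟩)
    · rwa [mem_preimage, tentMask_of_lt hp (hA hxA)]
    · rwa [mem_preimage, tentMask_tentMirror hp (hA haA).le]

theorem disjoint_image_tentMirror : Disjoint A (tentMirror p '' A) := by
  rw [disjoint_left]
  rintro _ hxA ⟨a, haA, rfl⟩
  exact (hA hxA).not_gt (lt_tentMirror hp (hA haA))

end

theorem setLIntegral_image_tentMirror {p : ℝ} (hp : p ∈ Ioo 0 1) {A : Set ℝ}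
    (hA : MeasurableSet A) (ρ : ℝ → ℝ≥0∞) :
    ∫⁻ x in tentMirror p '' A, ρ x =
      ENNReal.ofReal ((1 - p) / p) * ∫⁻ a in A, ρ (tentMirror p a) := by
  have hk : 0 < (1 - p) / p := div_pos (by linarith [hp.2]) hp.1
  have hderiv : ∀ a, HasDerivAt (tentMirror p) (-((1 - p) / p)) a := fun a => by
    unfold tentMirror
    simpa using ((hasDerivAt_id' a).const_mul ((1 - p) / p)).const_sub 1
  have hinj : Function.Injective (tentMirror p) := fun a b hab => by
    simpa [tentMirror, hk.ne'] using hab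
  rw [lintegral_image_eq_lintegral_abs_deriv_mul hA (fun a _ => (hderiv a).hasDerivWithinAt)
    hinj.injOn, abs_neg, abs_of_pos hk, lintegral_const_mul' _ _ ENNReal.ofReal_ne_top]

theorem withDensity_le_mul_withDensity_preimage_tentMask {p : ℝ} (hp : p ∈ Ioo 0 1)
    {ρ : ℝ → ℝ≥0∞} {A : Set ℝ} (hA : MeasurableSet A) (hAp : A ⊆ Iio p)
    (hmirror : ∀ a ∈ A, ρ a ≤ ρ (tentMirror p a)) :
    volume.withDensity ρ A ≤ ENNReal.ofReal p * volume.withDensity ρ (tentMask p ⁻¹' A) := by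
  set ν := volume.withDensity ρ
  set k := (1 - p) / p
  have hmirror_mass : ENNReal.ofReal k * ν A ≤ ν (tentMirror p '' A) := by
    rw [withDensity_apply' _ (tentMirror p '' A), setLIntegral_image_tentMirror hp hA,
      withDensity_apply _ hA]
    exact mul_le_mul_right (setLIntegral_mono' hA hmirror) _
  have hpk : ENNReal.ofReal p * (1 + ENNReal.ofReal k) = 1 := by
    rw [← ENNReal.ofReal_one, ← ENNReal.ofReal_add zero_le_one
      (div_pos (by linarith [hp.2]) hp.1).le, ← ENNReal.ofReal_mul hp.1.le]
    congr 1
    field_simp [hp.1.ne']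
    ring
  calc ν A = ENNReal.ofReal p * (ν A + ENNReal.ofReal k * ν A) := by
        rw [← one_add_mul, ← mul_assoc, hpk, one_mul]
    _ ≤ ENNReal.ofReal p * ν (tentMask p ⁻¹' A) := by
        rw [preimage_tentMask hp hAp, measure_union' (disjoint_image_tentMirror hp hAp) hA]
        gcongr

theorem tent_masking_mirror_conservative_general
    {Ω : Type*} [MeasurableSpace Ω] (μ : Measure Ω)
    (pstar : ℝ) (hp : pstar ∈ Set.Ioo (0:ℝ) 1)
    (P : Ω → ℝ) (hPm : Measurable P)
    (f : ℝ → ℝ)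
    (hdens : μ.map P = volume.withDensity (fun x => ENNReal.ofReal (f x)))
    (hmirror : ∀ a, 0 ≤ a → a ≤ pstar → f a ≤ f (1 - (1 - pstar) / pstar * a)) :
    ∀ A : Set ℝ, MeasurableSet A → A ⊆ Set.Ioo 0 pstar →
      μ {ω | P ω < pstar ∧ min (P ω) (pstar / (1 - pstar) * (1 - P ω)) ∈ A}
        ≤ ENNReal.ofReal pstar * μ {ω | min (P ω) (pstar / (1 - pstar) * (1 - P ω)) ∈ A} := by
  intro A hA hAsub
  have hAp : A ⊆ Iio pstar := fun a ha => (hAsub ha).2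
  have hlaw (S : Set ℝ) (hS : MeasurableSet S) :
      μ (P ⁻¹' S) = volume.withDensity (fun x => ENNReal.ofReal (f x)) S := by
    rw [← hdens, Measure.map_apply hPm hS]
  change μ (P ⁻¹' {x | x < pstar ∧ tentMask pstar x ∈ A})
    ≤ ENNReal.ofReal pstar * μ (P ⁻¹' (tentMask pstar ⁻¹' A))
  rw [setOf_lt_and_tentMask_mem hp hAp, hlaw A hA, hlaw _ (measurable_tentMask pstar hA)]
  exact withDensity_le_mul_withDensity_preimage_tentMask hp hA hAp fun a ha =>
    ENNReal.ofReal_le_ofReal (hmirror a (hAsub ha).1.le (hAp ha).le)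

/-- If `P` has a mirror-conservative density `f` on `[0,1]`
(`f a ≤ f (1 - (1-p*)/p* · a)` for all `a ∈ [0, p*]`), then under tent masking
`h(P) = 1{P < p*}`, `g(P) = min(P, p*/(1-p*)·(1-P))`, for every measurable
`A ⊆ (0, p*)` we have `ℙ(P < p* ∧ g(P) ∈ A) ≤ p* · ℙ(g(P) ∈ A)`, i.e.
`ℙ(h(P) = 1 | g(P)) ≤ p*` a.s. -/
theorem tent_masking_mirror_conservative
    {Ω : Type*} [MeasurableSpace Ω] (μ : Measure Ω) [IsProbabilityMeasure μ]
    (pstar : ℝ) (hp : pstar ∈ Set.Ioo (0:ℝ) 1)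
    (P : Ω → ℝ) (hPm : Measurable P)
    (f : ℝ → ℝ) (hfm : Measurable f) (hf0 : ∀ x, 0 ≤ f x)
    (hsupp : ∀ x ∉ Set.Icc (0:ℝ) 1, f x = 0)
    (hdens : μ.map P = volume.withDensity (fun x => ENNReal.ofReal (f x)))
    (hmirror : ∀ a, 0 ≤ a → a ≤ pstar → f a ≤ f (1 - (1 - pstar) / pstar * a)) :
    ∀ A : Set ℝ, MeasurableSet A → A ⊆ Set.Ioo 0 pstar →
      μ {ω | P ω < pstar ∧ min (P ω) (pstar / (1 - pstar) * (1 - P ω)) ∈ A}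
        ≤ ENNReal.ofReal pstar * μ {ω | min (P ω) (pstar / (1 - pstar) * (1 - P ω)) ∈ A} :=
  tent_masking_mirror_conservative_general μ pstar hp P hPm f hdens hmirror
end

section
/- Let 0 < p_l ≤ p_u < 1, set p̃ = p_l/(p_l + 1 - p_u), and let P be a random variable on [0,1] with a nondecreasing density f. With gap-railway masking (h(P) = 1 if P < p_l, h(P) = -1 if P > p_u; g(P) = P for P < p_l, g(P) = (p_l/(1-p_u))(P - p_u) for P > p_u), for every measurable set A ⊆ (0, p_l) it holds that ℙ(P < p_l and g(P) ∈ A) ≤ p̃ · ℙ((P < p_l or P > p_u) and g(P) ∈ A). -/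
/-!
Both events are preimages under `P`: the first is `{P ∈ A}`, the second the disjoint union
`{P ∈ A} ∪ {P ∈ φ⁻¹ A}`, where `φ x = p_l/(1-p_u) (x - p_u)` is the railway map.
The substitution `y = φ x` gives `∫_{φ⁻¹ A} f = (1-p_u)/p_l ∫_A f(φ⁻¹ y) dy`, and
`y ≤ φ⁻¹ y ≤ 1` on `(0, p_l)`, so monotonicity of `f` yields
`(1-p_u) ℙ(P ∈ A) ≤ p_l ℙ(P ∈ φ⁻¹ A)`; adding `p_l ℙ(P ∈ A)` to both sides is the claim.
-/

open MeasureTheory Set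

open scoped ENNReal

theorem map_volume_mul_sub {c : ℝ} (hc : c ≠ 0) (b : ℝ) :
    Measure.map (fun x => c * (x - b)) volume = ENNReal.ofReal |c⁻¹| • volume := by
  have : (fun x : ℝ => c * (x - b)) = (fun y => y + -(c * b)) ∘ (c * ·) := by
    funext x; simp only [Function.comp_apply]; ring
  rw [this, ← Measure.map_map (measurable_add_const _) (measurable_const_mul c),
    Real.map_volume_mul_left hc, Measure.map_smul, map_add_right_eq_self]

theorem setLIntegral_preimage_mul_sub {c : ℝ} (hc : c ≠ 0) (b : ℝ) (g : ℝ → ℝ≥0∞)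
    (A : Set ℝ) :
    ∫⁻ x in (fun x => c * (x - b)) ⁻¹' A, g x =
      ENNReal.ofReal |c⁻¹| * ∫⁻ y in A, g (c⁻¹ * y + b) := by
  have hemb : MeasurableEmbedding fun x : ℝ => c * (x - b) :=
    (Continuous.measurableEmbedding (by fun_prop) fun x y h => by
      simpa [hc] using h)
  have hmp : MeasurePreserving (fun x : ℝ => c * (x - b)) volume
      (ENNReal.ofReal |c⁻¹| • volume) := ⟨hemb.measurable, map_volume_mul_sub hc b⟩
  have := hmp.setLIntegral_comp_preimage_emb hemb (fun y => g (c⁻¹ * y + b)) A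
  simp only [inv_mul_cancel_left₀ hc, sub_add_cancel] at this
  rw [this, Measure.restrict_smul, lintegral_smul_measure, smul_eq_mul]

theorem le_ofReal_div_mul_add_of_ofReal_mul_le {a b : ℝ≥0∞} {s t : ℝ} (hs : 0 ≤ s)
    (ht : 0 ≤ t) (hst : 0 < s + t) (h : ENNReal.ofReal t * a ≤ ENNReal.ofReal s * b) :
    a ≤ ENNReal.ofReal (s / (s + t)) * (a + b) := by
  rw [← ENNReal.mul_le_mul_iff_right (ENNReal.ofReal_pos.2 hst).ne' ENNReal.ofReal_ne_top,
    ← mul_assoc, ← ENNReal.ofReal_mul hst.le, mul_div_cancel₀ _ hst.ne',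
    ENNReal.ofReal_add hs ht, add_mul, mul_add]
  gcongr

noncomputable def railwayMap (pl pu x : ℝ) : ℝ := pl / (1 - pu) * (x - pu)

noncomputable def gapRailwayMask (pl pu x : ℝ) : ℝ := if x < pl then x else railwayMap pl pu x

section
variable {pl pu : ℝ}

theorem lt_of_railwayMap_pos (hl : 0 < pl) (hu : pu < 1) {x : ℝ}
    (hx : 0 < railwayMap pl pu x) : pu < x := by
  have : 0 < pl / (1 - pu) := div_pos hl (sub_pos.2 hu)
  exact sub_pos.1 (pos_of_mul_pos_right hx this.le)

theorem setOf_lt_and_gapRailwayMask_mem {A : Set ℝ} (hA : A ⊆ Iio pl) :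
    {x | x < pl ∧ gapRailwayMask pl pu x ∈ A} = A := by
  ext x
  simp only [gapRailwayMask, mem_ofPred_eq]
  constructor
  · rintro ⟨hx, hxA⟩
    rwa [if_pos hx] at hxA
  · intro hxA
    have hx : x < pl := hA hxA
    exact ⟨hx, by rwa [if_pos hx]⟩

theorem setOf_unmasked_and_gapRailwayMask_mem (hl : 0 < pl) (hlu : pl ≤ pu) (hu : pu < 1)
    {A : Set ℝ} (hA : A ⊆ Ioo 0 pl) :
    {x | (x < pl ∨ pu < x) ∧ gapRailwayMask pl pu x ∈ A} = A ∪ railwayMap pl pu ⁻¹' A := by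
  ext x
  simp only [gapRailwayMask, mem_ofPred_eq, mem_union, mem_preimage]
  by_cases hx : x < pl
  · have : railwayMap pl pu x ∉ A := fun h =>
      (lt_of_railwayMap_pos hl hu (hA h).1).not_gt (hx.trans_le hlu)
    simp [hx, this]
  · have : x ∉ A := fun h => hx (hA h).2
    simp only [hx, if_false, false_or, this]
    exact ⟨And.right, fun h => ⟨lt_of_railwayMap_pos hl hu (hA h).1, h⟩⟩

theorem disjoint_railwayMap_preimage (hl : 0 < pl) (hlu : pl ≤ pu) (hu : pu < 1)
    {A : Set ℝ} (hA : A ⊆ Ioo 0 pl) : Disjoint A (railwayMap pl pu ⁻¹' A) :=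
  disjoint_left.2 fun _ hx hφx =>
    (hA hx).2.not_ge (hlu.trans (lt_of_railwayMap_pos hl hu (hA hφx).1).le)

theorem inv_mul_add_mem_Icc (hl : 0 < pl) (hlu : pl ≤ pu) (hu : pu < 1) {y : ℝ}
    (hy : y ∈ Ioo 0 pl) : (pl / (1 - pu))⁻¹ * y + pu ∈ Icc y 1 := by
  obtain ⟨hy0, hyl⟩ := hy
  rw [inv_div]
  have hscale : (1 - pu) / pl * y ≤ 1 - pu := by
    rw [div_mul_eq_mul_div, div_le_iff₀ hl]
    exact mul_le_mul_of_nonneg_left hyl.le (sub_nonneg.2 hu.le)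
  constructor
  · nlinarith [div_nonneg (sub_nonneg.2 hu.le) hl.le]
  · linarith

theorem ofReal_mul_setLIntegral_le_railwayMap_preimage (hl : 0 < pl) (hlu : pl ≤ pu)
    (hu : pu < 1) {f : ℝ → ℝ} (hmono : MonotoneOn f (Icc 0 1)) {A : Set ℝ}
    (hA : MeasurableSet A) (hAsub : A ⊆ Ioo 0 pl) :
    ENNReal.ofReal (1 - pu) * ∫⁻ x in A, ENNReal.ofReal (f x) ≤
      ENNReal.ofReal pl * ∫⁻ x in railwayMap pl pu ⁻¹' A, ENNReal.ofReal (f x) := by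
  have hc : 0 < pl / (1 - pu) := div_pos hl (sub_pos.2 hu)
  have hpointwise : ∀ y ∈ A, ENNReal.ofReal (f y) ≤
      ENNReal.ofReal (f ((pl / (1 - pu))⁻¹ * y + pu)) := by
    intro y hy
    obtain ⟨hy0, hyl⟩ := hAsub hy
    obtain ⟨hle, hle1⟩ := inv_mul_add_mem_Icc hl hlu hu (hAsub hy)
    exact ENNReal.ofReal_le_ofReal <|
      hmono ⟨hy0.le, by linarith⟩ ⟨hy0.le.trans hle, hle1⟩ hle
  calc ENNReal.ofReal (1 - pu) * ∫⁻ x in A, ENNReal.ofReal (f x)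
      = ENNReal.ofReal pl * (ENNReal.ofReal |(pl / (1 - pu))⁻¹| *
          ∫⁻ x in A, ENNReal.ofReal (f x)) := by
        rw [← mul_assoc, ← ENNReal.ofReal_mul hl.le, abs_of_pos (inv_pos.2 hc), inv_div,
          mul_div_cancel₀ _ hl.ne']
    _ ≤ ENNReal.ofReal pl * (ENNReal.ofReal |(pl / (1 - pu))⁻¹| *
          ∫⁻ y in A, ENNReal.ofReal (f ((pl / (1 - pu))⁻¹ * y + pu))) := by
        gcongr 2
        exact setLIntegral_mono' hA hpointwise
    _ = ENNReal.ofReal pl * ∫⁻ x in railwayMap pl pu ⁻¹' A, ENNReal.ofReal (f x) :=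
        congrArg _
          (setLIntegral_preimage_mul_sub hc.ne' pu (fun x => ENNReal.ofReal (f x)) A).symm
end

theorem gap_railway_masking_nondecreasing_density_general
    {Ω : Type*} [MeasurableSpace Ω] (μ : Measure Ω)
    (pl pu : ℝ) (hl : 0 < pl) (hlu : pl ≤ pu) (hu : pu < 1)
    (P : Ω → ℝ) (hPm : Measurable P)
    (f : ℝ → ℝ)
    (hdens : μ.map P = volume.withDensity (fun x => ENNReal.ofReal (f x)))
    (hmono : MonotoneOn f (Set.Icc (0:ℝ) 1)) :
    ∀ A : Set ℝ, MeasurableSet A → A ⊆ Set.Ioo 0 pl →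
      μ {ω | P ω < pl ∧ (if P ω < pl then P ω else pl / (1 - pu) * (P ω - pu)) ∈ A}
        ≤ ENNReal.ofReal (pl / (pl + 1 - pu)) *
          μ {ω | (P ω < pl ∨ pu < P ω) ∧
                 (if P ω < pl then P ω else pl / (1 - pu) * (P ω - pu)) ∈ A} := by
  intro A hA hAsub
  have hlaw : ∀ S, MeasurableSet S → μ (P ⁻¹' S) = ∫⁻ x in S, ENNReal.ofReal (f x) :=
    fun S hS => by rw [← Measure.map_apply hPm hS, hdens, withDensity_apply _ hS]
  have hrail : MeasurableSet (railwayMap pl pu ⁻¹' A) :=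
    (measurable_const.mul (measurable_id.sub_const pu)) hA
  change μ (P ⁻¹' {x | x < pl ∧ gapRailwayMask pl pu x ∈ A}) ≤ _ *
    μ (P ⁻¹' {x | (x < pl ∨ pu < x) ∧ gapRailwayMask pl pu x ∈ A})
  rw [setOf_lt_and_gapRailwayMask_mem (hAsub.trans Ioo_subset_Iio_self),
    setOf_unmasked_and_gapRailwayMask_mem hl hlu hu hAsub, hlaw A hA, hlaw _ (hA.union hrail),
    lintegral_union hrail (disjoint_railwayMap_preimage hl hlu hu hAsub),
    show pl + 1 - pu = pl + (1 - pu) by ring]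
  exact le_ofReal_div_mul_add_of_ofReal_mul_le hl.le (sub_nonneg.2 hu.le) (by linarith)
    (ofReal_mul_setLIntegral_le_railwayMap_preimage hl hlu hu hmono hA hAsub)

/-- If `P` has a nondecreasing density `f` on `[0,1]`, then under
gap-railway masking with parameters `0 < p_l ≤ p_u < 1` (`g(P) = P` for `P < p_l`,
`g(P) = p_l/(1-p_u)·(P - p_u)` for `P > p_u`), for every measurable `A ⊆ (0, p_l)`,
`ℙ(P < p_l ∧ g(P) ∈ A) ≤ p̃ · ℙ((P < p_l ∨ P > p_u) ∧ g(P) ∈ A)` where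
`p̃ = p_l/(p_l + 1 - p_u)`. -/
theorem gap_railway_masking_nondecreasing_density
    {Ω : Type*} [MeasurableSpace Ω] (μ : Measure Ω) [IsProbabilityMeasure μ]
    (pl pu : ℝ) (hl : 0 < pl) (hlu : pl ≤ pu) (hu : pu < 1)
    (P : Ω → ℝ) (hPm : Measurable P)
    (f : ℝ → ℝ) (hfm : Measurable f) (hf0 : ∀ x, 0 ≤ f x)
    (hsupp : ∀ x ∉ Set.Icc (0:ℝ) 1, f x = 0)
    (hdens : μ.map P = volume.withDensity (fun x => ENNReal.ofReal (f x)))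
    (hmono : MonotoneOn f (Set.Icc (0:ℝ) 1)) :
    ∀ A : Set ℝ, MeasurableSet A → A ⊆ Set.Ioo 0 pl →
      μ {ω | P ω < pl ∧ (if P ω < pl then P ω else pl / (1 - pu) * (P ω - pu)) ∈ A}
        ≤ ENNReal.ofReal (pl / (pl + 1 - pu)) *
          μ {ω | (P ω < pl ∨ pu < P ω) ∧
                 (if P ω < pl then P ω else pl / (1 - pu) * (P ω - pu)) ∈ A} :=
  gap_railway_masking_nondecreasing_density_general μ pl pu hl hlu hu P hPm f hdens hmono
end
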